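/- Define the boundaries of the continuation region by ⎍x(c) = x_v − ȳ(c) and x̄(c) = x_v + ȳ(c) for c > 0. Then lim_{c → 0⁺} (x̄(c) − x_v)/c^{1/4} = (6σ²/α)^{1/4} and lim_{c → 0⁺} (x_v − ⎍x(c))/c^{1/4} = (6σ²/α)^{1/4}; in particular lim_{c → 0⁺} ⎍x(c) = lim_{c → 0⁺} x̄(c) = x_v. -/

import Mathlib

/-!
With `x = θ y` one has `ξ(y) = (k₂ / θ²) · x · (x - 2 tanh (x / 2))`. The defect
`x - 2 tanh (x / 2)` has derivative `tanh² (x / 2)`, so it is increasing and positive on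
`(0, ∞)`, and by l'Hôpital it behaves like `x³ / 12` at `0⁺`. Hence `ξ` is increasing,
`ȳ(c) → 0`, and `c = ξ(ȳ(c)) ~ k₂ θ² ȳ(c)⁴ / 12`, i.e. `ȳ(c) / c^{1/4} → (12 / (k₂ θ²))^{1/4}`,
which is `(6σ² / α)^{1/4}` for the given `θ` and `k₂`.
-/

/-- `ξ(y) = k₂ y² − (2k₂/θ) ((e^{θy}+e^{−θy}−2)/(e^{θy}−e^{−θy})) y`. -/
noncomputable def xiFun (θ k₂ y : ℝ) : ℝ :=
  k₂ * y ^ 2 -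
    (2 * k₂ / θ) *
      ((Real.exp (θ * y) + Real.exp (-(θ * y)) - 2) /
        (Real.exp (θ * y) - Real.exp (-(θ * y)))) * y

open Real Set Filter Topology

namespace Real

theorem hasDerivAt_tanh (x : ℝ) : HasDerivAt tanh (1 - tanh x ^ 2) x := by
  have h := (hasDerivAt_sinh x).div (hasDerivAt_cosh x) (cosh_pos x).ne'
  rw [show tanh = sinh / cosh from funext tanh_eq_sinh_div_cosh]
  refine h.congr_deriv ?_
  simp only [Pi.div_apply]
  field_simp

theorem tanh_pos {x : ℝ} (hx : 0 < x) : 0 < tanh x := by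
  rw [tanh_eq_sinh_div_cosh]
  exact div_pos (sinh_pos_iff.2 hx) (cosh_pos x)

theorem exp_add_exp_neg_sub_two_div (x : ℝ) :
    (exp x + exp (-x) - 2) / (exp x - exp (-x)) = tanh (x / 2) := by
  obtain ⟨u, rfl⟩ : ∃ u, x = 2 * u := ⟨x / 2, by ring⟩
  have hnum : exp (2 * u) + exp (-(2 * u)) - 2 = 4 * sinh u * sinh u := by
    have := cosh_eq (2 * u)
    rw [cosh_two_mul] at this; nlinarith [cosh_sq u]
  have hden : exp (2 * u) - exp (-(2 * u)) = 4 * sinh u * cosh u := by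
    have := sinh_eq (2 * u)
    rw [sinh_two_mul] at this; linarith
  rw [mul_div_cancel_left₀ u two_ne_zero, hnum, hden, tanh_eq_sinh_div_cosh]
  rcases eq_or_ne (sinh u) 0 with h | h
  · simp [h]
  · rw [mul_div_mul_left _ _ (by positivity)]

end Real

noncomputable def tanhDefect (x : ℝ) : ℝ := x - 2 * tanh (x / 2)

theorem hasDerivAt_tanhDefect (x : ℝ) : HasDerivAt tanhDefect (tanh (x / 2) ^ 2) x := by
  have h := (hasDerivAt_id x).sub
    (((hasDerivAt_tanh (x / 2)).comp x ((hasDerivAt_id x).div_const 2)).const_mul 2)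
  exact h.congr_deriv (by ring)

theorem strictMonoOn_tanhDefect : StrictMonoOn tanhDefect (Ici 0) :=
  strictMonoOn_of_hasDerivWithinAt_pos (convex_Ici 0)
    (fun x _ => (hasDerivAt_tanhDefect x).continuousAt.continuousWithinAt)
    (fun x _ => (hasDerivAt_tanhDefect x).hasDerivWithinAt)
    (fun x hx => by
      rw [interior_Ici] at hx
      exact pow_pos (tanh_pos (half_pos hx)) 2)

theorem tanhDefect_zero : tanhDefect 0 = 0 := by simp [tanhDefect]

theorem tanhDefect_pos {x : ℝ} (hx : 0 < x) : 0 < tanhDefect x :=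
  tanhDefect_zero ▸ strictMonoOn_tanhDefect self_mem_Ici hx.le hx

theorem tanhDefect_nonneg {x : ℝ} (hx : 0 ≤ x) : 0 ≤ tanhDefect x :=
  tanhDefect_zero ▸ strictMonoOn_tanhDefect.monotoneOn self_mem_Ici hx hx

theorem tendsto_tanh_half_div : Tendsto (fun x => tanh (x / 2) / x) (𝓝[>] 0) (𝓝 (1 / 2)) := by
  have h := (((hasDerivAt_tanh ((0:ℝ) / 2)).comp (0:ℝ)
    ((hasDerivAt_id (0:ℝ)).div_const 2))).tendsto_slope_zero_right
  simpa [div_eq_inv_mul] using h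

theorem tendsto_tanhDefect_div_pow_three :
    Tendsto (fun x => tanhDefect x / x ^ 3) (𝓝[>] 0) (𝓝 (1 / 12)) := by
  refine HasDerivAt.lhopital_zero_nhdsGT (f' := fun x => tanh (x / 2) ^ 2)
    (g' := fun x => 3 * x ^ 2) (Eventually.of_forall hasDerivAt_tanhDefect)
    (Eventually.of_forall fun x => by simpa using hasDerivAt_pow 3 x) ?_ ?_ ?_ ?_
  · filter_upwards [self_mem_nhdsWithin] with x hx
    exact (mul_pos three_pos (pow_pos hx 2)).ne'
  · simpa [tanhDefect] using
      (hasDerivAt_tanhDefect 0).continuousAt.tendsto.mono_left nhdsWithin_le_nhds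
  · simpa using ((continuous_pow 3).tendsto' 0 0 (by simp)).mono_left nhdsWithin_le_nhds
  · rw [show (1 / 12 : ℝ) = (1 / 2) ^ 2 / 3 by norm_num]
    exact ((tendsto_tanh_half_div.pow 2).div_const 3).congr fun x => by ring

theorem xiFun_eq {θ : ℝ} (hθ : θ ≠ 0) (k₂ y : ℝ) :
    xiFun θ k₂ y = k₂ / θ ^ 2 * (θ * y * tanhDefect (θ * y)) := by
  rw [xiFun, exp_add_exp_neg_sub_two_div, tanhDefect]
  field_simp

theorem strictMonoOn_xiFun {θ k₂ : ℝ} (hθ : 0 < θ) (hk₂ : 0 < k₂) :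
    StrictMonoOn (xiFun θ k₂) (Ici 0) := by
  intro a ha b hb hab
  have hθa₀ : 0 ≤ θ * a := mul_nonneg hθ.le ha
  have hqa : 0 ≤ tanhDefect (θ * a) := tanhDefect_nonneg hθa₀
  have hqab : tanhDefect (θ * a) < tanhDefect (θ * b) :=
    strictMonoOn_tanhDefect hθa₀ (mul_nonneg hθ.le hb) (by gcongr)
  rw [xiFun_eq hθ.ne', xiFun_eq hθ.ne']
  gcongr

theorem xiFun_pos {θ k₂ y : ℝ} (hθ : 0 < θ) (hk₂ : 0 < k₂) (hy : 0 < y) : 0 < xiFun θ k₂ y := by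
  rw [xiFun_eq hθ.ne']
  have := tanhDefect_pos (mul_pos hθ hy)
  positivity

theorem tendsto_xiFun_div_pow_four {θ : ℝ} (hθ : 0 < θ) (k₂ : ℝ) :
    Tendsto (fun y => xiFun θ k₂ y / y ^ 4) (𝓝[>] 0) (𝓝 (k₂ * θ ^ 2 / 12)) := by
  have hθy : Tendsto (fun y => θ * y) (𝓝[>] 0) (𝓝[>] 0) := by
    simpa using Filter.TendstoNhdsWithinIoi.const_mul hθ (tendsto_id (x := 𝓝[>] (0 : ℝ)))
  have h := (tendsto_tanhDefect_div_pow_three.comp hθy).const_mul (k₂ * θ ^ 2)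
  rw [mul_one_div] at h
  refine h.congr' ?_
  filter_upwards [self_mem_nhdsWithin] with y hy
  rw [Function.comp_apply, xiFun_eq hθ.ne']
  field_simp

theorem tendsto_nhdsGT_zero_of_rightInverse {f g : ℝ → ℝ} (hf : MonotoneOn f (Ioi 0))
    (hf₀ : ∀ y, 0 < y → 0 < f y) (hg : ∀ c, 0 < c → 0 < g c ∧ f (g c) = c) :
    Tendsto g (𝓝[>] 0) (𝓝[>] 0) := by
  refine tendsto_nhdsWithin_iff.2 ⟨?_, eventually_nhdsWithin_of_forall fun c hc => (hg c hc).1⟩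
  refine tendsto_order.2 ⟨fun a ha => ?_, fun ε hε => ?_⟩
  · exact eventually_nhdsWithin_of_forall fun c hc => ha.trans (hg c hc).1
  · filter_upwards [Ioo_mem_nhdsGT (hf₀ ε hε)] with c hc
    by_contra! hεc
    have := hf hε (hg c hc.1).1 hεc
    rw [(hg c hc.1).2] at this
    exact hc.2.not_ge this

theorem tendsto_nhdsGT_zero_of_xiFun_eq {θ k₂ : ℝ} (hθ : 0 < θ) (hk₂ : 0 < k₂) {ybar : ℝ → ℝ}
    (hybar : ∀ c, 0 < c → 0 < ybar c ∧ xiFun θ k₂ (ybar c) = c) :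
    Tendsto ybar (𝓝[>] 0) (𝓝[>] 0) :=
  tendsto_nhdsGT_zero_of_rightInverse
    ((strictMonoOn_xiFun hθ hk₂).monotoneOn.mono Ioi_subset_Ici_self)
    (fun _ hy => xiFun_pos hθ hk₂ hy) hybar

theorem tendsto_div_rpow_of_xiFun_eq {θ k₂ : ℝ} (hθ : 0 < θ) (hk₂ : 0 < k₂) {ybar : ℝ → ℝ}
    (hybar : ∀ c, 0 < c → 0 < ybar c ∧ xiFun θ k₂ (ybar c) = c) :
    Tendsto (fun c => ybar c / c ^ (1 / 4 : ℝ)) (𝓝[>] 0)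
      (𝓝 ((12 / (k₂ * θ ^ 2)) ^ (1 / 4 : ℝ))) := by
  have hratio : Tendsto (fun c => c / ybar c ^ 4) (𝓝[>] 0) (𝓝 (k₂ * θ ^ 2 / 12)) := by
    refine ((tendsto_xiFun_div_pow_four hθ k₂).comp
      (tendsto_nhdsGT_zero_of_xiFun_eq hθ hk₂ hybar)).congr' ?_
    filter_upwards [self_mem_nhdsWithin] with c hc
    rw [Function.comp_apply, (hybar c hc).2]
  have h := (hratio.inv₀ (by positivity)).rpow_const (p := 1 / 4) (Or.inr (by norm_num))
  rw [inv_div] at h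
  refine h.congr' ?_
  filter_upwards [self_mem_nhdsWithin] with c (hc : 0 < c)
  have hy := (hybar c hc).1
  rw [inv_div, div_rpow (by positivity) hc.le, ← rpow_natCast, ← rpow_mul hy.le]
  norm_num

theorem stmt_11_general (ρ σ Δ b θ k₂ α xv : ℝ)
    (hρ : 0 < ρ) (hσ : 0 < σ) (hΔ : 0 < Δ) (hb : 0 ≤ b)
    (hθ : θ = Real.sqrt (2 * ρ) / σ)
    (hα : α = (Δ + b) / Δ ^ 2)
    (hk₂ : k₂ = α / ρ)
    (ybar : ℝ → ℝ)
    (hybar : ∀ c : ℝ, 0 < c → 0 < ybar c ∧ xiFun θ k₂ (ybar c) = c) :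
    Filter.Tendsto (fun c => ((xv + ybar c) - xv) / c ^ ((1 : ℝ) / 4))
      (nhdsWithin 0 (Set.Ioi 0)) (nhds ((6 * σ ^ 2 / α) ^ ((1 : ℝ) / 4))) ∧
    Filter.Tendsto (fun c => (xv - (xv - ybar c)) / c ^ ((1 : ℝ) / 4))
      (nhdsWithin 0 (Set.Ioi 0)) (nhds ((6 * σ ^ 2 / α) ^ ((1 : ℝ) / 4))) ∧
    Filter.Tendsto (fun c => xv - ybar c) (nhdsWithin 0 (Set.Ioi 0)) (nhds xv) ∧
    Filter.Tendsto (fun c => xv + ybar c) (nhdsWithin 0 (Set.Ioi 0)) (nhds xv) := by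
  have hθ₀ : 0 < θ := hθ ▸ div_pos (sqrt_pos.2 (by positivity)) hσ
  have hα₀ : 0 < α := hα ▸ by positivity
  have hk₂₀ : 0 < k₂ := hk₂ ▸ div_pos hα₀ hρ
  have hconst : 12 / (k₂ * θ ^ 2) = 6 * σ ^ 2 / α := by
    rw [hk₂, hθ, div_pow, sq_sqrt (by positivity)]
    field_simp
    ring
  have hquarter := tendsto_div_rpow_of_xiFun_eq hθ₀ hk₂₀ hybar
  rw [hconst] at hquarter
  have hzero :=
    tendsto_nhds_of_tendsto_nhdsWithin (tendsto_nhdsGT_zero_of_xiFun_eq hθ₀ hk₂₀ hybar)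
  refine ⟨by simpa using hquarter, by simpa using hquarter, ?_, ?_⟩
  · simpa using tendsto_const_nhds.sub hzero
  · simpa using tendsto_const_nhds.add hzero

theorem stmt_11 (ρ σ Δ b θ k₂ α xv : ℝ)
    (hρ : 0 < ρ) (hσ : 0 < σ) (hΔ : 0 < Δ) (hb : 0 ≤ b)
    (hθ : θ = Real.sqrt (2 * ρ) / σ)
    (hα : α = (Δ + b) / Δ ^ 2)
    (hk₂ : k₂ = α / ρ)
    (hxv : xv = Δ * (Δ + 2 * b) / (2 * (Δ + b)))
    (ybar : ℝ → ℝ)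
    (hybar : ∀ c : ℝ, 0 < c → 0 < ybar c ∧ xiFun θ k₂ (ybar c) = c) :
    Filter.Tendsto (fun c => ((xv + ybar c) - xv) / c ^ ((1 : ℝ) / 4))
      (nhdsWithin 0 (Set.Ioi 0)) (nhds ((6 * σ ^ 2 / α) ^ ((1 : ℝ) / 4))) ∧
    Filter.Tendsto (fun c => (xv - (xv - ybar c)) / c ^ ((1 : ℝ) / 4))
      (nhdsWithin 0 (Set.Ioi 0)) (nhds ((6 * σ ^ 2 / α) ^ ((1 : ℝ) / 4))) ∧
    Filter.Tendsto (fun c => xv - ybar c) (nhdsWithin 0 (Set.Ioi 0)) (nhds xv) ∧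
    Filter.Tendsto (fun c => xv + ybar c) (nhdsWithin 0 (Set.Ioi 0)) (nhds xv) :=
  stmt_11_general ρ σ Δ b θ k₂ α xv hρ hσ hΔ hb hθ hα hk₂ ybar hybar
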